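/- Let S = conv(v₀, …, v_d) ⊂ ℝ^d be a d-simplex spanned by affinely independent points, let F : S → S be a mapping, and let λ_i denote the i-th barycentric coordinate with respect to v₀, …, v_d. For every nonempty subset {i₁, …, iₙ} ⊆ {0, …, d} and every x ∈ conv(v_{i₁}, …, v_{iₙ}), there exists k ∈ {i₁, …, iₙ} such that λ_k(x) − λ_k(F(x)) = max_{j = 0, …, d} (λ_j(x) − λ_j(F(x))); that is, the maximum of the barycentric-coordinate decrease is attained at an index belonging to the face containing x. Moreover, if x is a fixed point of F, then every index j ∈ {0, …, d} attains this maximum (which equals 0). -/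

import Mathlib

/-! The decreases `λ_j x - λ_j (F x)` sum to `0`, and off the face of `x` they are `≤ 0` because
`λ_j x = 0` there while `λ_j (F x) ≥ 0`. Hence the sum over the face is `≥ 0`, so the largest
decrease on the face is `≥ 0` and dominates every decrease off the face. -/

open Finset

theorem Finset.exists_mem_forall_le_of_sum_eq_zero {ι M : Type*} [Fintype ι]
    [AddCommGroup M] [LinearOrder M] [IsOrderedAddMonoid M] {g : ι → M} {I : Finset ι}
    (hI : I.Nonempty) (hsum : ∑ i, g i = 0) (hout : ∀ j ∉ I, g j ≤ 0) :
    ∃ k ∈ I, ∀ j, g j ≤ g k := by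
  classical
  obtain ⟨k, hkI, hk⟩ := I.exists_max_image g hI
  have hsum_I : 0 ≤ ∑ i ∈ I, g i := by
    have hsum_compl : ∑ i ∈ Iᶜ, g i ≤ 0 := sum_nonpos fun j hj ↦ hout j (mem_compl.1 hj)
    rw [← sum_add_sum_compl I g, add_eq_zero_iff_eq_neg] at hsum
    exact hsum ▸ neg_nonneg.2 hsum_compl
  obtain ⟨i, hiI, hi⟩ := exists_le_of_sum_le hI ((sum_const_zero (s := I)).trans_le hsum_I)
  refine ⟨k, hkI, fun j ↦ ?_⟩
  by_cases hj : j ∈ I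
  · exact hk j hj
  · exact (hout j hj).trans (hi.trans (hk i hiI))

namespace AffineBasis

variable {ι 𝕜 E : Type*} [Ring 𝕜] [AddCommGroup E] [Module 𝕜 E] (b : AffineBasis ι 𝕜 E)

theorem coord_eq_zero_of_mem_convexHull_image [PartialOrder 𝕜] [IsOrderedRing 𝕜]
    {I : Set ι} {x : E} (hx : x ∈ convexHull 𝕜 (b '' I)) {j : ι} (hj : j ∉ I) : b.coord j x = 0 := by
  refine convexHull_min ?_ ((convex_singleton 0).affine_preimage (b.coord j)) hx
  rintro _ ⟨i, hi, rfl⟩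
  exact b.coord_apply_ne fun hji ↦ hj (hji ▸ hi)

theorem sum_coord_sub_coord [Fintype ι] (x y : E) : ∑ i, (b.coord i x - b.coord i y) = 0 := by
  rw [sum_sub_distrib, b.sum_coord_apply_eq_one, b.sum_coord_apply_eq_one, sub_self]

end AffineBasis

/-- **The argmax-based labeling satisfies the face condition.**
Let `S = conv(v₀, …, v_d) ⊂ ℝ^d` be a `d`-simplex spanned by affinely independent
points (the vertices `b i` of an affine basis `b` of `ℝ^d`, with barycentric
coordinates `λ_i = b.coord i`), and `F : S → S` a mapping.  For every nonempty
index set `I = {i₁, …, iₙ}` and every `x ∈ conv(v_{i₁}, …, v_{iₙ})` there is a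
`k ∈ I` at which `max_j (λ_j x − λ_j (F x))` is attained.  Moreover if `x ∈ S` is a
fixed point of `F`, then every index `j` attains this maximum, which equals `0`. -/
theorem argmax_on_face (d : ℕ)
    (b : AffineBasis (Fin (d + 1)) ℝ (EuclideanSpace ℝ (Fin d)))
    (F : EuclideanSpace ℝ (Fin d) → EuclideanSpace ℝ (Fin d))
    (hF : Set.MapsTo F (convexHull ℝ (Set.range ⇑b)) (convexHull ℝ (Set.range ⇑b))) :
    (∀ I : Finset (Fin (d + 1)), I.Nonempty →
      ∀ x ∈ convexHull ℝ (⇑b '' (I : Set (Fin (d + 1)))),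
        ∃ k ∈ I, ∀ j, b.coord j x - b.coord j (F x) ≤ b.coord k x - b.coord k (F x)) ∧
    (∀ x ∈ convexHull ℝ (Set.range ⇑b), F x = x →
      ∀ j, b.coord j x - b.coord j (F x) = 0 ∧
        ∀ j', b.coord j' x - b.coord j' (F x) ≤ b.coord j x - b.coord j (F x)) := by
  refine ⟨fun I hI x hx ↦ ?_, fun x _ hfix j ↦ by simp [hfix]⟩
  have hFx := hF (convexHull_mono (Set.image_subset_range _ _) hx)
  rw [b.convexHull_eq_nonneg_coord] at hFx
  refine exists_mem_forall_le_of_sum_eq_zero hI (b.sum_coord_sub_coord x (F x)) fun j hj ↦ ?_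
  rw [b.coord_eq_zero_of_mem_convexHull_image hx hj, zero_sub, neg_nonpos]
  exact hFx j
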